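/- arXiv:2507.11323 — 6 statements merged into one kernel-verified Lean document; each statement's English description precedes it below -/
import Mathlib

section
/- If an aggregation function agg satisfies Neutrality, i.e., agg(A,S) = agg(Core(A), Core(S)) where Core removes zero elements from a multiset, then adding to an EW-QBAF a new edge (β,α) with edge weight 0 leaves the strength of α unchanged under the modular semantics induced by agg (edge-neutrality): formally, for every iteration i of the update procedure, the iterated strength σ^(i)(α) in the extended framework equals that in the original framework, hence the limits (when defined) are equal. -/
open Set

structure QBAF (A : Type*) [DecidableEq A] where
  att : Finset (A × A)
  sup : Finset (A × A)
  disj : Disjoint att sup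
  tau : A → ℝ
  w : A × A → ℝ

namespace QBAF

variable {A : Type*} [DecidableEq A]

/-- The set of all edges (attacks and supports). -/
def edges (Q : QBAF A) : Finset (A × A) := Q.att ∪ Q.sup

/-- Multiset of edge-weighted attacker strengths of `α`. -/
def attMS (Q : QBAF A) (σ : A → ℝ) (α : A) : Multiset ℝ :=
  (Q.att.filter (fun r => r.2 = α)).val.map (fun r => σ r.1 * Q.w r)

/-- Multiset of edge-weighted supporter strengths of `α`. -/
def supMS (Q : QBAF A) (σ : A → ℝ) (α : A) : Multiset ℝ :=
  (Q.sup.filter (fun r => r.2 = α)).val.map (fun r => σ r.1 * Q.w r)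

/-- Iterates of the modular-semantics update procedure:
`σ⁰ = τ`, `σ^(i+1)(α) = infl (τ α) (agg A^σ_α S^σ_α)`. -/
def iter (agg : Multiset ℝ → Multiset ℝ → ℝ) (infl : ℝ → ℝ → ℝ)
    (Q : QBAF A) : ℕ → A → ℝ
  | 0 => Q.tau
  | i + 1 => fun α =>
      infl (Q.tau α)
        (agg (Q.attMS (iter agg infl Q i) α) (Q.supMS (iter agg infl Q i) α))

/-- Replace the edge weight function. -/
def setW (Q : QBAF A) (w' : A × A → ℝ) : QBAF A := { Q with w := w' }

/-- Replace the base score function. -/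
def setTau (Q : QBAF A) (τ' : A → ℝ) : QBAF A := { Q with tau := τ' }

/-- For acyclic EW-QBAFs the iteration stabilizes after `card A` steps, so this is
the strength obtained by a forward pass in topological order. -/
def strength [Fintype A] (agg : Multiset ℝ → Multiset ℝ → ℝ) (infl : ℝ → ℝ → ℝ)
    (Q : QBAF A) : A → ℝ := iter agg infl Q (Fintype.card A)

end QBAF

/-- `Core` of a multiset of reals: the sub-multiset of nonzero elements. -/
noncomputable def mcore (S : Multiset ℝ) : Multiset ℝ := S.filter (fun x => x ≠ 0)

/-- There is a (nonempty) directed path from `a` to `b` using edges of `R`. -/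
def HasPath {A : Type*} (R : Finset (A × A)) (a b : A) : Prop :=
  Relation.TransGen (fun x y => (x, y) ∈ R) a b

/-- `p` is a directed path from `a` to `b`: a nonempty list of consecutive edges of `R`. -/
def IsPath {A : Type*} (R : Finset (A × A)) (a b : A) (p : List (A × A)) : Prop :=
  p ≠ [] ∧ (∀ e ∈ p, e ∈ R) ∧ List.Chain' (fun e f => e.2 = f.1) p ∧
    p.head?.map Prod.fst = some a ∧ p.getLast?.map Prod.snd = some b

/-- The EW-QBAF is acyclic. -/
def QAcyclic {A : Type*} [DecidableEq A] (Q : QBAF A) : Prop :=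
  ∀ α, ¬ HasPath Q.edges α α

/-- A gradual semantics assigning strengths to arguments of any EW-QBAF. -/
abbrev Sem (A : Type*) [DecidableEq A] := QBAF A → A → ℝ

/-- `S` dominates `T`: either both cores are empty, or there is a sub-multiset of
`Core S` in bijection `f` with `Core T` such that `x ≤ f x` (the bijection encoded
as a multiset of pairs). -/
def MDominates (S T : Multiset ℝ) : Prop :=
  (mcore S = 0 ∧ mcore T = 0) ∨
    ∃ P : Multiset (ℝ × ℝ), P.map Prod.fst = mcore T ∧ P.map Prod.snd ≤ mcore S ∧
      ∀ q ∈ P, q.1 ≤ q.2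

/-- Monotonicity of an aggregation function. -/
def AggMonotone (agg : Multiset ℝ → Multiset ℝ → ℝ) : Prop :=
  (∀ A S, MDominates A S → agg A S ≤ 0) ∧
  (∀ A S, MDominates S A → 0 ≤ agg A S) ∧
  (∀ A A' S, MDominates A A' → agg A S ≤ agg A' S) ∧
  (∀ A S S', MDominates S S' → agg A S' ≤ agg A S)

/-- Monotonicity of an influence function. -/
def InflMonotone (infl : ℝ → ℝ → ℝ) : Prop :=
  (∀ b a, a < 0 → infl b a ≤ b) ∧
  (∀ b a, 0 < a → b ≤ infl b a) ∧
  (∀ a b₁ b₂, b₁ ≤ b₂ → infl b₁ a ≤ infl b₂ a) ∧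
  (∀ b a₁ a₂, a₁ ≤ a₂ → infl b a₁ ≤ infl b a₂)

/-- Edge-monotonicity of a semantics: increasing the weight of a single attack
(support) edge does not increase (decrease) the strength of its target. -/
def EdgeMono {A : Type*} [DecidableEq A] (σ : Sem A) : Prop :=
  ∀ (Q : QBAF A) (r : A × A) (w' : A × A → ℝ),
    r ∈ Q.edges → Q.w r ≤ w' r → (∀ t, t ≠ r → w' t = Q.w t) →
    (r ∈ Q.att → σ (Q.setW w') r.2 ≤ σ Q r.2) ∧
    (r ∈ Q.sup → σ Q r.2 ≤ σ (Q.setW w') r.2)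

/-- (Base-score) monotonicity of a semantics: if `(β,α)` is an edge and the unique
path from `β` to `α`, then increasing `τ(β)` changes `σ(α)` sign-correctly. -/
def BaseMono {A : Type*} [DecidableEq A] (σ : Sem A) : Prop :=
  ∀ (Q : QBAF A) (β α : A) (τ' : A → ℝ),
    β ≠ α → (β, α) ∈ Q.edges → (∃! p, IsPath Q.edges β α p) →
    Q.tau β ≤ τ' β → (∀ γ, γ ≠ β → τ' γ = Q.tau γ) →
    ((β, α) ∈ Q.att → σ (Q.setTau τ') α ≤ σ Q α) ∧
    ((β, α) ∈ Q.sup → σ Q α ≤ σ (Q.setTau τ') α)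

/-- Edge-neutrality of a semantics: adding a fresh edge of weight `0` leaves the
strength of its target unchanged. -/
def EdgeNeutralSem {A : Type*} [DecidableEq A] (σ : Sem A) : Prop :=
  ∀ (Q Q' : QBAF A) (β α : A),
    Q'.tau = Q.tau → Q.att ⊆ Q'.att → Q.sup ⊆ Q'.sup →
    Q'.edges = insert (β, α) Q.edges →
    (∀ r ∈ Q.edges, Q'.w r = Q.w r) → Q'.w (β, α) = 0 →
    σ Q' α = σ Q α

/-- Edge-stability of a semantics: if all incoming edges of `α` have weight `0`,
the strength of `α` is its base score. -/
def EdgeStable {A : Type*} [DecidableEq A] (σ : Sem A) : Prop :=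
  ∀ (Q : QBAF A) (α : A), (∀ r ∈ Q.edges, r.2 = α → Q.w r = 0) → σ Q α = Q.tau α

/-- `s` is attainable for `α` by varying edge weights in `[0,1]`. -/
def Attainable {A : Type*} [DecidableEq A] (σ : Sem A) (Q : QBAF A) (α : A) (s : ℝ) : Prop :=
  ∃ w' : A × A → ℝ, (∀ r, w' r ∈ Set.Icc (0 : ℝ) 1) ∧ σ (Q.setW w') α = s

/-- The gradient-based relation attribution explanation `∇_{r→α}^σ`: the derivative
of the strength of `α` with respect to the weight of edge `r`. -/
noncomputable def grae {A : Type*} [DecidableEq A] (σ : Sem A) (Q : QBAF A)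
    (r : A × A) (α : A) : ℝ :=
  deriv (fun δ => σ (Q.setW (Function.update Q.w r δ)) α) (Q.w r)

/-- Neutrality of an aggregation function: `agg A S = agg (Core A) (Core S)`. -/
def Neutrality (agg : Multiset ℝ → Multiset ℝ → ℝ) : Prop :=
  ∀ A S, agg A S = agg (mcore A) (mcore S)

/-! A weight-`0` edge `(β, α)` contributes the element `0` to the attacker or supporter multiset
of `α`, and Core discards it. So under Neutrality every update step aggregates the same value in
both frameworks, and induction on `i` shows that all iterates agree at every argument. -/

theorem mcore_map {ι : Type*} (s : Multiset ι) (f : ι → ℝ) :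
    mcore (s.map f) = (s.filter fun x => f x ≠ 0).map f :=
  Multiset.filter_map _ f s

theorem mcore_map_eq_of_subset_insert {ι : Type*} [DecidableEq ι] {s t : Finset ι}
    {f g : ι → ℝ} {e : ι} (hst : s ⊆ t) (hts : t ⊆ insert e s) (hgf : ∀ x ∈ s, g x = f x)
    (he : g e = 0) : mcore (t.val.map g) = mcore (s.val.map f) := by
  have hsupp : (t.filter fun x => g x ≠ 0) = s.filter fun x => f x ≠ 0 := by
    ext x
    simp only [Finset.mem_filter]
    constructor
    · rintro ⟨hxt, hx⟩
      have hxs : x ∈ s :=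
        (Finset.mem_insert.mp (hts hxt)).resolve_left fun hxe => hx (hxe ▸ he)
      exact ⟨hxs, hgf x hxs ▸ hx⟩
    · rintro ⟨hxs, hx⟩
      exact ⟨hst hxs, (hgf x hxs).symm ▸ hx⟩
  rw [mcore_map, mcore_map, ← Finset.filter_val, hsupp, Finset.filter_val]
  exact Multiset.map_congr rfl fun x hx => hgf x (Multiset.mem_filter.mp hx).1

theorem Finset.filter_subset_insert_filter {α : Type*} [DecidableEq α] (p : α → Prop)
    [DecidablePred p] {s t : Finset α} {e : α} (h : t ⊆ insert e s) :
    t.filter p ⊆ insert e (s.filter p) := by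
  refine (Finset.filter_subset_filter p h).trans ?_
  rw [Finset.filter_insert]
  split_ifs
  exacts [subset_rfl, Finset.subset_insert _ _]

theorem Finset.subset_insert_of_union_subset_insert {α : Type*} [DecidableEq α]
    {a b a' b' : Finset α} {e : α} (hd : Disjoint a' b') (hb : b ⊆ b')
    (h : a' ∪ b' ⊆ insert e (a ∪ b)) : a' ⊆ insert e a := by
  intro x hx
  rcases Finset.mem_insert.mp (h (Finset.mem_union_left _ hx)) with rfl | hx'
  · exact Finset.mem_insert_self _ _
  rcases Finset.mem_union.mp hx' with ha | hb'
  · exact Finset.mem_insert_of_mem ha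
  · exact absurd (hb hb') (Finset.disjoint_left.mp hd hx)

namespace QBAF

variable {A : Type*} [DecidableEq A]

theorem iter_congr (agg : Multiset ℝ → Multiset ℝ → ℝ) (infl : ℝ → ℝ → ℝ) {Q Q' : QBAF A}
    (htau : Q'.tau = Q.tau)
    (hagg : ∀ σ γ, agg (Q'.attMS σ γ) (Q'.supMS σ γ) = agg (Q.attMS σ γ) (Q.supMS σ γ)) :
    iter agg infl Q' = iter agg infl Q := by
  funext i
  induction i with
  | zero => exact htau
  | succ i ih => funext γ; simp only [iter, ih, htau, hagg]

/-- `attMS` and `supMS` are both of this shape, for the attack and the support relation. -/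
theorem mcore_incoming_eq_of_subset_insert {F F' : Finset (A × A)} {w w' : A × A → ℝ}
    {e : A × A} (hF : F ⊆ F') (hF' : F' ⊆ insert e F) (hw : ∀ r ∈ F, w' r = w r)
    (he : w' e = 0) (σ : A → ℝ) (γ : A) :
    mcore ((F'.filter fun r => r.2 = γ).val.map fun r => σ r.1 * w' r) =
      mcore ((F.filter fun r => r.2 = γ).val.map fun r => σ r.1 * w r) :=
  mcore_map_eq_of_subset_insert (Finset.filter_subset_filter _ hF)
    (Finset.filter_subset_insert_filter _ hF')
    (fun r hr => by rw [hw r (Finset.mem_filter.mp hr).1]) (by rw [he, mul_zero])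

theorem att_subset_insert {Q Q' : QBAF A} {e : A × A} (hsup : Q.sup ⊆ Q'.sup)
    (hedges : Q'.edges = insert e Q.edges) : Q'.att ⊆ insert e Q.att :=
  Finset.subset_insert_of_union_subset_insert Q'.disj hsup hedges.le

theorem sup_subset_insert {Q Q' : QBAF A} {e : A × A} (hatt : Q.att ⊆ Q'.att)
    (hedges : Q'.edges = insert e Q.edges) : Q'.sup ⊆ insert e Q.sup := by
  refine Finset.subset_insert_of_union_subset_insert Q'.disj.symm hatt ?_
  rw [Finset.union_comm, Finset.union_comm Q.sup]
  exact hedges.le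

end QBAF

theorem edge_neutrality_general {A : Type*} [DecidableEq A]
    (agg : Multiset ℝ → Multiset ℝ → ℝ) (infl : ℝ → ℝ → ℝ)
    (hagg : Neutrality agg)
    (Q Q' : QBAF A) (β α : A)
    (htau : Q'.tau = Q.tau)
    (hatt : Q.att ⊆ Q'.att) (hsup : Q.sup ⊆ Q'.sup)
    (hedges : Q'.edges = insert (β, α) Q.edges)
    (hw : ∀ r ∈ Q.edges, Q'.w r = Q.w r)
    (hw0 : Q'.w (β, α) = 0) :
    ∀ i : ℕ, QBAF.iter agg infl Q' i α = QBAF.iter agg infl Q i α := by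
  have hcore_att : ∀ σ γ, mcore (Q'.attMS σ γ) = mcore (Q.attMS σ γ) :=
    QBAF.mcore_incoming_eq_of_subset_insert hatt (QBAF.att_subset_insert hsup hedges)
      (fun r hr => hw r (Finset.mem_union_left _ hr)) hw0
  have hcore_sup : ∀ σ γ, mcore (Q'.supMS σ γ) = mcore (Q.supMS σ γ) :=
    QBAF.mcore_incoming_eq_of_subset_insert hsup (QBAF.sup_subset_insert hatt hedges)
      (fun r hr => hw r (Finset.mem_union_right _ hr)) hw0
  intro i
  rw [QBAF.iter_congr agg infl htau fun σ γ => by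
    rw [hagg, hagg (Q.attMS σ γ), hcore_att, hcore_sup]]

/-- **Edge-neutrality**: if `agg` satisfies Neutrality then adding a new edge
`(β,α)` of weight `0` leaves every iterate of the strength of `α` unchanged
under the induced modular semantics. -/
theorem edge_neutrality {A : Type*} [DecidableEq A]
    (agg : Multiset ℝ → Multiset ℝ → ℝ) (infl : ℝ → ℝ → ℝ)
    (hagg : Neutrality agg)
    (Q Q' : QBAF A) (β α : A)
    (htau : Q'.tau = Q.tau)
    (hatt : Q.att ⊆ Q'.att) (hsup : Q.sup ⊆ Q'.sup)
    (hedges : Q'.edges = insert (β, α) Q.edges)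
    (hnew : (β, α) ∉ Q.edges)
    (hw : ∀ r ∈ Q.edges, Q'.w r = Q.w r)
    (hw0 : Q'.w (β, α) = 0) :
    ∀ i : ℕ, QBAF.iter agg infl Q' i α = QBAF.iter agg infl Q i α :=
  edge_neutrality_general agg infl hagg Q Q' β α htau hatt hsup hedges hw hw0
end

section
/- If an aggregation function agg satisfies Balance (agg(A,S) = 0 whenever Core(A) = Core(S), and agg is invariant under replacing A, S by balanced multisets) and the influence function infl satisfies Balance (infl(b, 0) = b), then the induced modular semantics satisfies edge-stability: for any argument α, if every incoming edge r of α has weight w(r) = 0, then σ^(i)(α) = τ(α) for every iteration i, and hence σ(α) = τ(α). -/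
open Set

/-- Balance of an aggregation function. -/
def AggBalance (agg : Multiset ℝ → Multiset ℝ → ℝ) : Prop :=
  (∀ A S, mcore A = mcore S → agg A S = 0) ∧
  (∀ A A' S S', mcore A = mcore A' → mcore S = mcore S' → agg A S = agg A' S')

/-- Balance of an influence function. -/
def InflBalance (infl : ℝ → ℝ → ℝ) : Prop := ∀ b, infl b 0 = b

theorem mcore_eq_zero_iff {S : Multiset ℝ} : mcore S = 0 ↔ ∀ x ∈ S, x = 0 := by
  simp [mcore, Multiset.filter_eq_nil]

namespace QBAF

variable {A : Type*} [DecidableEq A]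

theorem iter_succ_apply (agg : Multiset ℝ → Multiset ℝ → ℝ) (infl : ℝ → ℝ → ℝ)
    (Q : QBAF A) (i : ℕ) (α : A) :
    Q.iter agg infl (i + 1) α =
      infl (Q.tau α) (agg (Q.attMS (Q.iter agg infl i) α) (Q.supMS (Q.iter agg infl i) α)) :=
  rfl

theorem mcore_attMS_eq_zero {Q : QBAF A} {α : A} (hw : ∀ r ∈ Q.att, r.2 = α → Q.w r = 0)
    (σ : A → ℝ) : mcore (Q.attMS σ α) = 0 := by
  simp +contextual [mcore_eq_zero_iff, attMS, hw]

theorem mcore_supMS_eq_zero {Q : QBAF A} {α : A} (hw : ∀ r ∈ Q.sup, r.2 = α → Q.w r = 0)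
    (σ : A → ℝ) : mcore (Q.supMS σ α) = 0 := by
  simp +contextual [mcore_eq_zero_iff, supMS, hw]

end QBAF

/-- **Edge-stability**: if `agg` and `infl` satisfy their Balance properties, and all
edges incoming to `α` have weight `0`, then every iterate of the strength of `α`
equals its base score, hence so does the limit. -/
theorem edge_stability {A : Type*} [DecidableEq A]
    (agg : Multiset ℝ → Multiset ℝ → ℝ) (infl : ℝ → ℝ → ℝ)
    (hagg : AggBalance agg) (hinfl : InflBalance infl)
    (Q : QBAF A) (α : A)
    (hw : ∀ r ∈ Q.edges, r.2 = α → Q.w r = 0) :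
    ∀ i : ℕ, QBAF.iter agg infl Q i α = Q.tau α := by
  rintro (_ | i)
  · rfl
  have hatt := QBAF.mcore_attMS_eq_zero
    (fun r hr ↦ hw r (Finset.mem_union_left _ hr)) (Q.iter agg infl i)
  have hsup := QBAF.mcore_supMS_eq_zero
    (fun r hr ↦ hw r (Finset.mem_union_right _ hr)) (Q.iter agg infl i)
  rw [QBAF.iter_succ_apply, hagg.1 _ _ (hatt.trans hsup.symm), hinfl]
end

section
/- Let σ satisfy edge-directionality on an EW-QBAF, and let r be an edge independent of the topic argument α (there is no path from the target of r to α, and r is not incident into α). Then the G-RAE of r with respect to α is zero: ∇_{r→α}^σ = 0 (irrelevance). -/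
open Set

/-- Edge-directionality (local form): the strength of any argument `γ` is unaffected,
for any weight value, by an edge whose target has no path to `γ` and is not `γ`. -/
def EdgeDirectionalSem {A : Type*} [DecidableEq A] (σ : Sem A) : Prop :=
  ∀ (Q : QBAF A) (r : A × A) (γ : A) (w' : A × A → ℝ),
    r ∈ Q.edges → ¬ HasPath Q.edges r.2 γ → r.2 ≠ γ →
    (∀ t, t ≠ r → w' t = Q.w t) → σ (Q.setW w') γ = σ Q γ

theorem grae_eq_zero_of_forall_update {A : Type*} [DecidableEq A] {σ : Sem A} {Q : QBAF A}
    {r : A × A} {α : A} (h : ∀ δ, σ (Q.setW (Function.update Q.w r δ)) α = σ Q α) :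
    grae σ Q r α = 0 := by
  rw [grae, funext h]
  exact deriv_const _ _

/-- **Irrelevance**: if `σ` satisfies edge-directionality and `r` is an edge
independent of the topic argument `α` (no path from the target of `r` to `α`, and
`r` is not incident into `α`), then the G-RAE of `r` w.r.t. `α` is zero. -/
theorem irrelevance {A : Type*} [DecidableEq A]
    (σ : Sem A) (hdir : EdgeDirectionalSem σ)
    (Q : QBAF A) (α : A) (r : A × A) (hr : r ∈ Q.edges)
    (hnopath : ¬ HasPath Q.edges r.2 α) (hne : r.2 ≠ α) :
    grae σ Q r α = 0 :=
  grae_eq_zero_of_forall_update fun δ =>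
    hdir Q r α (Function.update Q.w r δ) hr hnopath hne fun _ ht => Function.update_of_ne ht _ _
end

section
/- Counterfactuality for direct edges: let σ satisfy edge-monotonicity on an acyclic EW-QBAF and let r be a direct edge into α with well-defined G-RAE ∇_{r→α}^σ. Define w' by w'(r) = 0 and w'(t) = w(t) otherwise. Then: (1) if ∇_{r→α}^σ < 0, then σ(α) ≤ σ_{w'}(α); (2) if ∇_{r→α}^σ > 0, then σ(α) ≥ σ_{w'}(α). -/
open Set

lemma monotone_deriv_nonneg_aux {f : ℝ → ℝ} (hf : Monotone f) {x : ℝ}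
    (hd : DifferentiableAt ℝ f x) : 0 ≤ deriv f x := by
  have h := hd.hasDerivAt
  rw [hasDerivAt_iff_tendsto_slope] at h
  have h' : Filter.Tendsto (slope f x) (nhdsWithin x (Set.Ioi x)) (nhds (deriv f x)) :=
    h.mono_left (nhdsWithin_mono _ (fun y hy => ne_of_gt hy))
  refine ge_of_tendsto h' ?_
  filter_upwards [self_mem_nhdsWithin] with y hy
  rw [slope_def_field]
  exact div_nonneg (sub_nonneg.2 (hf (le_of_lt hy))) (sub_nonneg.2 (le_of_lt hy))

lemma antitone_deriv_nonpos_aux {f : ℝ → ℝ} (hf : Antitone f) {x : ℝ}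
    (hd : DifferentiableAt ℝ f x) : deriv f x ≤ 0 := by
  have : 0 ≤ deriv (fun y => -f y) x :=
    monotone_deriv_nonneg_aux (fun a b hab => neg_le_neg (hf hab)) hd.neg
  rw [deriv.fun_neg] at this
  linarith

/-- **Counterfactuality for direct edges**: for an acyclic EW-QBAF with an
edge-monotonic semantics and a direct edge `r` into `α` with well-defined G-RAE,
setting `w(r) := 0` does not decrease `σ(α)` if the G-RAE is negative, and does
not increase `σ(α)` if the G-RAE is positive. -/
theorem counterfactuality_direct {A : Type*} [DecidableEq A]
    (σ : Sem A) (hem : EdgeMono σ)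
    (Q : QBAF A) (hacyc : QAcyclic Q) (α : A) (r : A × A)
    (hr : r ∈ Q.edges) (htarget : r.2 = α)
    (hw : ∀ t, Q.w t ∈ Set.Icc (0 : ℝ) 1)
    (hdiff : DifferentiableAt ℝ
      (fun δ => σ (Q.setW (Function.update Q.w r δ)) α) (Q.w r)) :
    (grae σ Q r α < 0 → σ Q α ≤ σ (Q.setW (Function.update Q.w r 0)) α) ∧
    (0 < grae σ Q r α → σ (Q.setW (Function.update Q.w r 0)) α ≤ σ Q α) := by
  set f : ℝ → ℝ := fun δ => σ (Q.setW (Function.update Q.w r δ)) α with hf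
  have key : ∀ δ₁ δ₂ : ℝ, δ₁ ≤ δ₂ →
      (r ∈ Q.att → f δ₂ ≤ f δ₁) ∧ (r ∈ Q.sup → f δ₁ ≤ f δ₂) := by
    intro δ₁ δ₂ hle
    have h := hem (Q.setW (Function.update Q.w r δ₁)) r (Function.update Q.w r δ₂)
      (by simpa [QBAF.setW, QBAF.edges] using hr)
      (by simp [QBAF.setW, hle])
      (by intro t ht; simp [QBAF.setW, Function.update_of_ne ht])
    have hatt : (Q.setW (Function.update Q.w r δ₁)).att = Q.att := rfl
    have hsup : (Q.setW (Function.update Q.w r δ₁)).sup = Q.sup := rfl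
    have hsw : (Q.setW (Function.update Q.w r δ₁)).setW (Function.update Q.w r δ₂)
        = Q.setW (Function.update Q.w r δ₂) := rfl
    rw [hatt, hsup, hsw, htarget] at h
    exact h
  have hQ : Q.setW Q.w = Q := rfl
  have hfw : f (Q.w r) = σ Q α := by
    simp only [hf, Function.update_eq_self, hQ]
  have h0 : 0 ≤ Q.w r := (hw r).1
  constructor
  · intro hneg
    have hattr : r ∈ Q.att := by
      rcases Finset.mem_union.1 hr with h | h
      · exact h
      · exfalso
        have hmono : Monotone f := fun a b hab => (key a b hab).2 h
        have := monotone_deriv_nonneg_aux hmono hdiff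
        exact absurd this (not_le.2 hneg)
    have := (key 0 (Q.w r) h0).1 hattr
    rw [hfw] at this
    exact this
  · intro hpos
    have hsupr : r ∈ Q.sup := by
      rcases Finset.mem_union.1 hr with h | h
      · exfalso
        have hanti : Antitone f := fun a b hab => (key a b hab).1 h
        have := antitone_deriv_nonpos_aux hanti hdiff
        exact absurd this (not_le.2 hpos)
      · exact h
    have := (key 0 (Q.w r) h0).2 hsupr
    rw [hfw] at this
    exact this
end

section
/- Qualitative invariability for direct edges: let σ satisfy edge-monotonicity on an acyclic EW-QBAF and let r be a direct edge into α. For δ ∈ [0,1], let ∇_δ denote the G-RAE of r w.r.t. α when w(r) is replaced by δ (assumed to exist for all δ). If ∇_{r→α}^σ < 0 at the current weight, then ∇_δ ≤ 0 for all δ ∈ [0,1]; if ∇_{r→α}^σ > 0, then ∇_δ ≥ 0 for all δ ∈ [0,1]. -/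
open Set

lemma mono_deriv_nonneg {f : ℝ → ℝ} (hf : Monotone f) (δ : ℝ)
    (hd : DifferentiableAt ℝ f δ) : 0 ≤ deriv f δ := by
  have h := hasDerivAt_iff_tendsto_slope.1 hd.hasDerivAt
  refine ge_of_tendsto h ?_
  filter_upwards [self_mem_nhdsWithin] with x hx
  rcases lt_or_gt_of_ne (Ne.symm hx) with h1 | h1
  · rw [slope_def_field]
    exact div_nonneg (sub_nonneg.2 (hf h1.le)) (sub_nonneg.2 h1.le)
  · rw [slope_def_field, div_nonneg_iff]
    right
    exact ⟨sub_nonpos.2 (hf h1.le), sub_nonpos.2 h1.le⟩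

lemma anti_deriv_nonpos {f : ℝ → ℝ} (hf : Antitone f) (δ : ℝ)
    (hd : DifferentiableAt ℝ f δ) : deriv f δ ≤ 0 := by
  have := mono_deriv_nonneg (f := fun x => -f x) (fun a b h => neg_le_neg (hf h)) δ hd.neg
  rw [deriv.fun_neg] at this
  linarith

/-- **Qualitative invariability for direct edges**: for an acyclic EW-QBAF with an
edge-monotonic semantics and a direct edge `r` into `α` whose G-RAE exists at every
weight `δ ∈ [0,1]`, a strictly negative (positive) G-RAE at the current weight
implies the G-RAE is nonpositive (nonnegative) at every `δ ∈ [0,1]`. -/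
theorem qualitative_invariability {A : Type*} [DecidableEq A]
    (σ : Sem A) (hem : EdgeMono σ)
    (Q : QBAF A) (hacyc : QAcyclic Q) (α : A) (r : A × A)
    (hr : r ∈ Q.edges) (htarget : r.2 = α)
    (hdiff : ∀ δ ∈ Set.Icc (0 : ℝ) 1, DifferentiableAt ℝ
      (fun x => σ (Q.setW (Function.update Q.w r x)) α) δ) :
    (grae σ Q r α < 0 → ∀ δ ∈ Set.Icc (0 : ℝ) 1,
      deriv (fun x => σ (Q.setW (Function.update Q.w r x)) α) δ ≤ 0) ∧
    (0 < grae σ Q r α → ∀ δ ∈ Set.Icc (0 : ℝ) 1,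
      0 ≤ deriv (fun x => σ (Q.setW (Function.update Q.w r x)) α) δ) := by
  set f : ℝ → ℝ := fun x => σ (Q.setW (Function.update Q.w r x)) α with hf
  -- key monotonicity facts from EdgeMono
  have key : ∀ x y : ℝ, x ≤ y →
      (r ∈ Q.att → f y ≤ f x) ∧ (r ∈ Q.sup → f x ≤ f y) := by
    intro x y hxy
    have h := hem (Q.setW (Function.update Q.w r x)) r (Function.update Q.w r y)
      (by simpa [QBAF.edges, QBAF.setW] using hr)
      (by simp [QBAF.setW, hxy])
      (by intro t ht; simp [QBAF.setW, Function.update_of_ne ht])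
    have hQ : (Q.setW (Function.update Q.w r x)).setW (Function.update Q.w r y)
        = Q.setW (Function.update Q.w r y) := rfl
    rw [hQ, htarget] at h
    exact ⟨fun hatt => h.1 (by simpa [QBAF.setW] using hatt),
           fun hsup => h.2 (by simpa [QBAF.setW] using hsup)⟩
  have hmono : r ∈ Q.sup → Monotone f := fun hs x y hxy => (key x y hxy).2 hs
  have hanti : r ∈ Q.att → Antitone f := fun ha x y hxy => (key x y hxy).1 ha
  constructor
  · intro hneg δ hδ
    have hratt : r ∈ Q.att := by
      rcases Finset.mem_union.1 hr with h | h
      · exact h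
      · exfalso
        have hw : Q.w r ∈ Set.Icc (0:ℝ) 1 ∨ True := Or.inr trivial
        -- grae σ Q r α = deriv f (Q.w r) ≥ 0 would contradict hneg; but we need
        -- needs differentiability. Use: if not differentiable, deriv = 0.
        have : 0 ≤ deriv f (Q.w r) := by
          by_cases hd : DifferentiableAt ℝ f (Q.w r)
          · exact mono_deriv_nonneg (hmono h) _ hd
          · simp [deriv_zero_of_not_differentiableAt hd]
        have hg : grae σ Q r α = deriv f (Q.w r) := rfl
        rw [hg] at hneg; linarith
    by_cases hd : DifferentiableAt ℝ f δ
    · exact anti_deriv_nonpos (hanti hratt) δ hd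
    · simp [deriv_zero_of_not_differentiableAt hd]
  · intro hpos δ hδ
    have hrsup : r ∈ Q.sup := by
      rcases Finset.mem_union.1 hr with h | h
      · exfalso
        have : deriv f (Q.w r) ≤ 0 := by
          by_cases hd : DifferentiableAt ℝ f (Q.w r)
          · exact anti_deriv_nonpos (hanti h) _ hd
          · simp [deriv_zero_of_not_differentiableAt hd]
        have hg : grae σ Q r α = deriv f (Q.w r) := rfl
        rw [hg] at hpos; linarith
      · exact h
    by_cases hd : DifferentiableAt ℝ f δ
    · exact mono_deriv_nonneg (hmono hrsup) δ hd
    · simp [deriv_zero_of_not_differentiableAt hd]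
end

section
/- The product aggregation function agg_Π(A,S) = ∏_{x∈A}(1−x) − ∏_{x∈S}(1−x), defined for multisets A, S of values in [0,1], satisfies Neutrality (agg_Π(A,S) = agg_Π(Core(A), Core(S))), Balance (A ≅ S implies agg_Π(A,S) = 0, and agg_Π is invariant under replacing arguments by balanced multisets), and Monotonicity (agg_Π(A,S) ≤ 0 if A ⪰ S; agg_Π(A,S) ≥ 0 if S ⪰ A; agg_Π(A,S) ≤ agg_Π(A',S) if A ⪰ A'; agg_Π(A,S) ≥ agg_Π(A,S') if S ⪰ S'). -/
open Set

/-- Product aggregation `agg_Π(A,S) = ∏_{x∈A}(1−x) − ∏_{x∈S}(1−x)`. -/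
noncomputable def aggProd (Aset S : Multiset ℝ) : ℝ :=
  (Aset.map (fun x => 1 - x)).prod - (S.map (fun x => 1 - x)).prod

/-- All elements of the multiset lie in `[0,1]`. -/
def InUnit (S : Multiset ℝ) : Prop := ∀ x ∈ S, x ∈ Set.Icc (0 : ℝ) 1

/-! Zeros contribute factors `1 - 0 = 1`, so both products only see the cores. On `[0,1]` the
factors `1 - x` lie in `[0,1]` and decrease in `x`; hence if `Core S` dominates `Core T`, the
product over `Core S` is at most the product over the part of `Core S` matched with `Core T`
(the remaining factors are `≤ 1`), which is at most the product over `Core T` factor by factor. -/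

namespace Multiset

variable {ι R : Type*}

theorem prod_map_filter_of_ne [CommMonoid R] {s : Multiset ι} {f : ι → R} {p : ι → Prop}
    [DecidablePred p] (hp : ∀ x ∈ s, f x ≠ 1 → p x) :
    ((s.filter p).map f).prod = (s.map f).prod := by
  conv_rhs => rw [← filter_add_not p s, map_add, prod_add]
  rw [prod_eq_one (s := (s.filter (¬ p ·)).map f), mul_one]
  simp only [mem_map, mem_filter]
  rintro _ ⟨x, ⟨hx, hnp⟩, rfl⟩
  exact not_not.1 (mt (hp x hx) hnp)

variable [CommSemiring R] [PartialOrder R] [IsOrderedRing R]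

theorem prod_map_le_one {s : Multiset ι} {f : ι → R} (h0 : ∀ i ∈ s, 0 ≤ f i)
    (h1 : ∀ i ∈ s, f i ≤ 1) : (s.map f).prod ≤ 1 := by
  simpa using prod_map_le_prod_map₀ f (fun _ => 1) h0 h1

theorem prod_map_le_prod_map_of_le {s t : Multiset ι} {f : ι → R} (hts : t ≤ s)
    (h0 : ∀ i ∈ s, 0 ≤ f i) (h1 : ∀ i ∈ s, f i ≤ 1) : (s.map f).prod ≤ (t.map f).prod := by
  obtain ⟨u, rfl⟩ := le_iff_exists_add.1 hts
  rw [map_add, prod_add]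
  exact mul_le_of_le_one_right
    (prod_map_nonneg fun i hi => h0 i (mem_add.2 (Or.inl hi)))
    (prod_map_le_one (fun i hi => h0 i (mem_add.2 (Or.inr hi)))
      fun i hi => h1 i (mem_add.2 (Or.inr hi)))

end Multiset

noncomputable def prodOneSub (S : Multiset ℝ) : ℝ := (S.map fun x => 1 - x).prod

theorem aggProd_eq_sub (Aset S : Multiset ℝ) : aggProd Aset S = prodOneSub Aset - prodOneSub S :=
  rfl

theorem prodOneSub_mcore (S : Multiset ℝ) : prodOneSub (mcore S) = prodOneSub S :=
  Multiset.prod_map_filter_of_ne fun x _ hx => by rintro rfl; simp at hx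

theorem aggProd_mcore (Aset S : Multiset ℝ) : aggProd (mcore Aset) (mcore S) = aggProd Aset S := by
  rw [aggProd_eq_sub, aggProd_eq_sub, prodOneSub_mcore, prodOneSub_mcore]

theorem InUnit.mcore {S : Multiset ℝ} (hS : InUnit S) : InUnit (mcore S) :=
  fun x hx => hS x (Multiset.mem_of_le (Multiset.filter_le _ S) hx)

theorem prodOneSub_le_of_le {S T : Multiset ℝ} (hTS : T ≤ S) (hS : InUnit S) :
    prodOneSub S ≤ prodOneSub T :=
  Multiset.prod_map_le_prod_map_of_le hTS (fun x hx => sub_nonneg.2 (hS x hx).2)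
    fun x hx => sub_le_self 1 (hS x hx).1

theorem prodOneSub_le_of_mDominates {S T : Multiset ℝ} (hS : InUnit S) (h : MDominates S T) :
    prodOneSub S ≤ prodOneSub T := by
  rw [← prodOneSub_mcore S, ← prodOneSub_mcore T]
  rcases h with ⟨hS0, hT0⟩ | ⟨P, hfst, hsnd, hle⟩
  · rw [hS0, hT0]
  have hsnd_unit : ∀ q ∈ P, q.2 ∈ Set.Icc (0 : ℝ) 1 := fun q hq =>
    hS.mcore _ (Multiset.mem_of_le hsnd (Multiset.mem_map_of_mem _ hq))
  calc prodOneSub (mcore S)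
      ≤ prodOneSub (P.map Prod.snd) := prodOneSub_le_of_le hsnd hS.mcore
    _ = (P.map fun q => 1 - q.2).prod := by rw [prodOneSub, Multiset.map_map]; rfl
    _ ≤ (P.map fun q => 1 - q.1).prod :=
        Multiset.prod_map_le_prod_map₀ _ _ (fun q hq => sub_nonneg.2 (hsnd_unit q hq).2)
          fun q hq => sub_le_sub_left (hle q hq) 1
    _ = prodOneSub (mcore T) := by rw [← hfst, prodOneSub, Multiset.map_map]; rfl

/-- **Properties of product aggregation** on multisets of values in `[0,1]`:
Neutrality, Balance (both clauses), and Monotonicity (all four clauses). -/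
theorem aggProd_properties :
    (∀ Aset S, InUnit Aset → InUnit S →
      aggProd Aset S = aggProd (mcore Aset) (mcore S)) ∧
    (∀ Aset S, InUnit Aset → InUnit S →
      mcore Aset = mcore S → aggProd Aset S = 0) ∧
    (∀ Aset Aset' S S', InUnit Aset → InUnit Aset' → InUnit S → InUnit S' →
      mcore Aset = mcore Aset' → mcore S = mcore S' →
      aggProd Aset S = aggProd Aset' S') ∧
    (∀ Aset S, InUnit Aset → InUnit S →
      MDominates Aset S → aggProd Aset S ≤ 0) ∧
    (∀ Aset S, InUnit Aset → InUnit S →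
      MDominates S Aset → 0 ≤ aggProd Aset S) ∧
    (∀ Aset Aset' S, InUnit Aset → InUnit Aset' → InUnit S →
      MDominates Aset Aset' → aggProd Aset S ≤ aggProd Aset' S) ∧
    (∀ Aset S S', InUnit Aset → InUnit S → InUnit S' →
      MDominates S S' → aggProd Aset S' ≤ aggProd Aset S) := by
  refine ⟨fun Aset S _ _ => (aggProd_mcore Aset S).symm, ?_, ?_, ?_, ?_, ?_, ?_⟩
  · intro Aset S _ _ h
    rw [← aggProd_mcore, h, aggProd, sub_self]
  · intro Aset Aset' S S' _ _ _ _ hA hS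
    rw [← aggProd_mcore, hA, hS, aggProd_mcore]
  · intro Aset S hA _ h
    exact sub_nonpos.2 (prodOneSub_le_of_mDominates hA h)
  · intro Aset S _ hS h
    exact sub_nonneg.2 (prodOneSub_le_of_mDominates hS h)
  · intro Aset Aset' S hA _ _ h
    exact sub_le_sub_right (prodOneSub_le_of_mDominates hA h) _
  · intro Aset S S' _ hS _ h
    exact sub_le_sub_left (prodOneSub_le_of_mDominates hS h) _
end
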